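/- arXiv:1007.4236 — 2 statements merged into one kernel-verified Lean document; each statement's English description precedes it below -/
import Mathlib

section
/- Let 2 ≤ k ≤ n and let σ ∈ S_n be the cycle (1 2 ⋯ k), i.e., σ(i) = i+1 for 1 ≤ i < k, σ(k) = 1, and σ fixes all other elements. Let τ be a transposition decomposition of σ consisting of exactly k − 1 transpositions. If swap(a_1, a_2) and swap(b_1, b_2) both occur in τ, with a_1 < a_2 and b_1 < b_2, and a_1 < b_1 < a_2, then b_2 ≤ a_2 (i.e., the chords {a_1,a_2} and {b_1,b_2} do not cross). -/
/-!
A product of `m` transpositions of `Fin n` has at least `n - m` cycles, while `σ` has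
`n - k + 1`; so in a factorization of `σ` into `k - 1` transpositions every factor joins two
distinct cycles of the product of the factors to its right.

Call `π` noncrossing if it maps every arc `(u, π u)` of the circle into itself. The cycle `σ` is
noncrossing, and removing a leftmost factor that joins two cycles keeps a product noncrossing,
so the product of every final segment of the factorization is noncrossing. Finally, if
`swap x y` joins two cycles of a noncrossing `π` into a noncrossing permutation, then no chord
`{b₁, b₂}` inside a cycle of `π` crosses `{x, y}`: with `π u = x` and `π t = y`, the arcs
`(u, y)` and `(t, x)` of `swap x y * π` and the arc `(u, x)` of `π` are invariant, and one of
them separates `b₁` from `b₂`.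
-/

open Equiv Finset Fin.NatCast

namespace Equiv.Perm

variable {α : Type*}

section SameCycle

variable [Finite α] {π ρ : Perm α}

theorem SameCycle.of_forall_sameCycle_apply (h : ∀ v, ρ.SameCycle v (π v)) {a b : α}
    (hab : π.SameCycle a b) : ρ.SameCycle a b := by
  obtain ⟨m, rfl⟩ := hab.exists_nat_pow_eq
  clear hab
  induction m with
  | zero => exact SameCycle.refl _ _
  | succ m ih => rw [pow_succ', mul_apply]; exact ih.trans (h _)

variable [DecidableEq α] {x y : α}

theorem sameCycle_swap_mul_of_sameCycle_left (hxy : ¬π.SameCycle x y) {w : α}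
    (hw : π.SameCycle x w) : (swap x y * π).SameCycle x w := by
  obtain ⟨m, rfl⟩ := hw.exists_nat_pow_eq
  clear hw
  induction m with
  | zero => exact SameCycle.refl _ _
  | succ m ih =>
    set u := (π ^ m) x
    have hu : π.SameCycle x (π u) := sameCycle_apply_right.mpr ⟨m, by simp [u]⟩
    rw [pow_succ', mul_apply]
    by_cases hux : π u = x
    · rw [hux]
    have huy : π u ≠ y := fun h => hxy (h ▸ hu)
    have : (swap x y * π) u = π u := by simp [swap_apply_of_ne_of_ne hux huy]
    exact this ▸ sameCycle_apply_right.mpr ih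

theorem sameCycle_swap_mul_of_sameCycle (hxy : ¬π.SameCycle x y) {v w : α}
    (h : π.SameCycle v w) : (swap x y * π).SameCycle v w := by
  refine SameCycle.of_forall_sameCycle_apply (fun u => ?_) h
  have hu : π.SameCycle u (π u) := (SameCycle.refl _ _).apply_right
  by_cases hux : π u = x
  · rw [hux]
    exact (sameCycle_swap_mul_of_sameCycle_left hxy (hux ▸ hu).symm).symm
  by_cases huy : π u = y
  · rw [huy, swap_comm]
    exact (sameCycle_swap_mul_of_sameCycle_left (fun h => hxy h.symm) (huy ▸ hu).symm).symm
  have : (swap x y * π) u = π u := by simp [swap_apply_of_ne_of_ne hux huy]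
  exact this ▸ (SameCycle.refl _ _).apply_right

theorem sameCycle_swap_mul_of_not_sameCycle (hxy : ¬π.SameCycle x y) :
    (swap x y * π).SameCycle x y := by
  have h : (swap x y * π).SameCycle x (π.symm x) :=
    sameCycle_swap_mul_of_sameCycle_left hxy (sameCycle_apply_right.mp (by rw [apply_symm_apply]))
  have hy : (swap x y * π) (π.symm x) = y := by simp
  simpa [hy] using sameCycle_apply_right.mpr h

theorem SameCycle.of_swap_mul {v w : α} (h : (swap x y * π).SameCycle v w) :
    π.SameCycle v w ∨
      ((π.SameCycle v x ∨ π.SameCycle v y) ∧ (π.SameCycle w x ∨ π.SameCycle w y)) := by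
  obtain ⟨m, rfl⟩ := h.exists_nat_pow_eq
  clear h
  induction m with
  | zero => exact Or.inl (SameCycle.refl _ _)
  | succ m ih =>
    set u := ((swap x y * π) ^ m) v
    have hu : π.SameCycle u (π u) := (SameCycle.refl _ _).apply_right
    have hvu : π.SameCycle v u → π.SameCycle v (π u) := fun h => h.trans hu
    rw [pow_succ', mul_apply, mul_apply]
    by_cases hux : π u = x
    · rw [hux, swap_apply_left]
      exact Or.inr ⟨ih.elim (fun h => Or.inl (hux ▸ hvu h)) (·.1), Or.inr (SameCycle.refl _ _)⟩
    by_cases huy : π u = y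
    · rw [huy, swap_apply_right]
      exact Or.inr ⟨ih.elim (fun h => Or.inr (huy ▸ hvu h)) (·.1), Or.inl (SameCycle.refl _ _)⟩
    rw [swap_apply_of_ne_of_ne hux huy]
    exact ih.imp hvu fun h => ⟨h.1, h.2.imp hu.symm.trans hu.symm.trans⟩

end SameCycle

section NumCycles

variable [Fintype α] [LinearOrder α]

def cycleMins (π : Perm α) : Finset α := {v | ∀ w, π.SameCycle v w → v ≤ w}

def numCycles (π : Perm α) : ℕ := #(cycleMins π)

@[simp]
theorem mem_cycleMins {π : Perm α} {v : α} : v ∈ cycleMins π ↔ ∀ w, π.SameCycle v w → v ≤ w := by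
  simp [cycleMins]

theorem numCycles_one : numCycles (1 : Perm α) = Fintype.card α := by
  simp [numCycles, cycleMins, sameCycle_one]

theorem numCycles_le_of_sameCycle_imp {π ρ : Perm α}
    (h : ∀ v w, ρ.SameCycle v w → π.SameCycle v w) : numCycles π ≤ numCycles ρ :=
  card_le_card fun v hv => by
    simp only [mem_cycleMins] at hv ⊢
    exact fun w hw => hv w (h v w hw)

variable {π : Perm α} {x y : α}

theorem numCycles_le_numCycles_swap_mul (hxy : π.SameCycle x y) :
    numCycles π ≤ numCycles (swap x y * π) :=
  numCycles_le_of_sameCycle_imp fun _ _ h => h.of_swap_mul.elim id fun ⟨hv, hw⟩ =>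
    (hv.elim id fun hvy => hvy.trans hxy.symm).trans
      (hw.elim id fun hwy => hwy.trans hxy.symm).symm

theorem card_cycleMins_sdiff_swap_mul_le_one :
    #(cycleMins π \ cycleMins (swap x y * π)) ≤ 1 := by
  have key : ∀ v ∈ cycleMins π \ cycleMins (swap x y * π), ∃ w < v,
      (π.SameCycle v x ∨ π.SameCycle v y) ∧ (π.SameCycle w x ∨ π.SameCycle w y) ∧
      ∀ w', π.SameCycle v w' → v ≤ w' := by
    intro v hv
    simp only [mem_sdiff, mem_cycleMins, not_forall, not_le] at hv
    obtain ⟨hmin, w, hw, hwv⟩ := hv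
    refine ⟨w, hwv, ?_⟩
    rcases hw.of_swap_mul with h | ⟨hv', hw'⟩
    · exact absurd (hmin w h) hwv.not_ge
    · exact ⟨hv', hw', hmin⟩
  have pigeonhole : ∀ a b c : α, (π.SameCycle a x ∨ π.SameCycle a y) →
      (π.SameCycle b x ∨ π.SameCycle b y) → (π.SameCycle c x ∨ π.SameCycle c y) →
      π.SameCycle a b ∨ π.SameCycle a c ∨ π.SameCycle b c := by
    intro a b c ha hb hc
    rcases ha with ha | ha <;> rcases hb with hb | hb <;> rcases hc with hc | hc <;>
      first
      | exact Or.inl (ha.trans hb.symm)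
      | exact Or.inr (Or.inl (ha.trans hc.symm))
      | exact Or.inr (Or.inr (hb.trans hc.symm))
  refine card_le_one.mpr fun v₁ h₁ v₂ h₂ => ?_
  obtain ⟨w₁, hw₁, hv₁, hw₁', hmin₁⟩ := key v₁ h₁
  obtain ⟨w₂, hw₂, hv₂, hw₂', hmin₂⟩ := key v₂ h₂
  rcases pigeonhole v₁ v₂ w₁ hv₁ hv₂ hw₁' with h | h | h₁
  · exact le_antisymm (hmin₁ _ h) (hmin₂ _ h.symm)
  · exact absurd (hmin₁ _ h) hw₁.not_ge
  rcases pigeonhole v₁ v₂ w₂ hv₁ hv₂ hw₂' with h | h₂ | h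
  · exact le_antisymm (hmin₁ _ h) (hmin₂ _ h.symm)
  · exact absurd ((hmin₁ _ h₂).trans_lt (hw₂.trans_le (hmin₂ _ h₁))) hw₁.not_gt
  · exact absurd (hmin₂ _ h) hw₂.not_ge

theorem numCycles_le_numCycles_swap_mul_add_one :
    numCycles π ≤ numCycles (swap x y * π) + 1 :=
  card_le_card_sdiff_add_card.trans
    (Nat.add_le_add_right card_cycleMins_sdiff_swap_mul_le_one _) |>.trans_eq (add_comm _ _)

theorem numCycles_add_card_le_of_sameCycle {s : Finset α}
    (hs : ∀ v ∈ s, ∀ w ∈ s, π.SameCycle v w) : numCycles π + #s ≤ Fintype.card α + 1 := by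
  have hinter : #(cycleMins π ∩ s) ≤ 1 := by
    refine card_le_one.mpr fun v hv w hw => ?_
    simp only [mem_inter, mem_cycleMins] at hv hw
    exact le_antisymm (hv.1 w (hs v hv.2 w hw.2)) (hw.1 v (hs w hw.2 v hv.2))
  have := card_union_add_card_inter (cycleMins π) s
  have := card_le_univ (cycleMins π ∪ s)
  unfold numCycles
  omega

end NumCycles

section Noncrossing

/-- Equivalently, the cycles of `π` follow the circular order and form a noncrossing partition. -/
def Noncrossing [SBtw α] (π : Perm α) : Prop :=
  ∀ u v, sbtw u v (π u) → sbtw u (π v) (π u)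

theorem Noncrossing.sbtw_of_sameCycle [SBtw α] [Finite α] {π : Perm α}
    (hπ : Noncrossing π) {u v w : α} (hv : sbtw u v (π u)) (hvw : π.SameCycle v w) :
    sbtw u w (π u) := by
  obtain ⟨m, rfl⟩ := hvw.exists_nat_pow_eq
  clear hvw
  induction m with
  | zero => exact hv
  | succ m ih => rw [pow_succ', mul_apply]; exact hπ u _ ih

variable {n : ℕ} {π : Perm (Fin n)} {x y : Fin n}

theorem sbtw_of_noncrossing_swap_mul (hxy : ¬π.SameCycle x y)
    (h : Noncrossing (swap x y * π)) {u : Fin n} (hu : π u = x) (hux : u ≠ x) : sbtw u y x := by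
  have hπ'u : (swap x y * π) u = y := by simp [hu]
  have hsc : π.SameCycle u x := hu ▸ (SameCycle.refl _ _).apply_right
  have hyu : y ≠ u := fun e => hxy (e ▸ hsc.symm)
  have hxy' : x ≠ y := fun e => hxy (e ▸ SameCycle.refl _ _)
  have hx : ¬sbtw u x y := fun hx => sbtw_irrefl_left <| hπ'u ▸
    h.sbtw_of_sameCycle (hπ'u ▸ hx) (sameCycle_swap_mul_of_sameCycle hxy hsc).symm
  rw [Fin.sbtw_iff] at hx ⊢
  omega

theorem sbtw_apply_of_noncrossing_swap_mul (hxy : ¬π.SameCycle x y)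
    (h : Noncrossing (swap x y * π)) {u v : Fin n} (hu : π u = x) (hv : sbtw u v x) :
    sbtw u (π v) x := by
  set π' := swap x y * π
  have hπ'u : π' u = y := by simp [π', hu]
  have hvu : v ≠ u := by rintro rfl; exact sbtw_irrefl_left hv
  have hyx : sbtw u y x :=
    sbtw_of_noncrossing_swap_mul hxy h hu (by rintro rfl; exact sbtw_irrefl_left_right hv)
  have hmove : π'.SameCycle v (π v) :=
    sameCycle_swap_mul_of_sameCycle hxy ((SameCycle.refl _ _).apply_right)
  by_cases hvt : π v = y
  · exact hvt ▸ hyx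
  by_cases hvy : sbtw u v y
  · have := h.sbtw_of_sameCycle (hπ'u ▸ hvy) hmove
    rw [hπ'u, Fin.sbtw_iff] at this
    rw [Fin.sbtw_iff] at hyx ⊢
    omega
  -- Otherwise the arc `(v, π v)` of `π'` would contain `x` but not `y`, which share a `π'`-cycle.
  by_contra hout
  have hvx : π v ≠ x := fun e => hvu (π.injective (e.trans hu.symm))
  have hπ'v : π' v = π v := by simp [π', swap_apply_of_ne_of_ne hvx hvt]
  have hx : sbtw v x (π' v) := by
    rw [hπ'v]
    rw [Fin.sbtw_iff] at hv hout ⊢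
    omega
  have := h.sbtw_of_sameCycle hx (sameCycle_swap_mul_of_not_sameCycle hxy)
  rw [hπ'v, Fin.sbtw_iff] at this
  rw [Fin.sbtw_iff] at hv hvy hyx hout
  omega

theorem Noncrossing.of_swap_mul (hxy : ¬π.SameCycle x y) (h : Noncrossing (swap x y * π)) :
    Noncrossing π := by
  intro u v huv
  by_cases hux : π u = x
  · rw [hux] at huv ⊢
    exact sbtw_apply_of_noncrossing_swap_mul hxy h hux huv
  by_cases huy : π u = y
  · rw [huy] at huv ⊢
    rw [swap_comm] at h
    exact sbtw_apply_of_noncrossing_swap_mul (fun h => hxy h.symm) h huy huv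
  have hπ'u : (swap x y * π) u = π u := by simp [swap_apply_of_ne_of_ne hux huy]
  have := h.sbtw_of_sameCycle (hπ'u ▸ huv)
    (sameCycle_swap_mul_of_sameCycle hxy ((SameCycle.refl _ _).apply_right))
  rwa [hπ'u] at this

theorem not_crossing_of_noncrossing_swap_mul (hxy : ¬π.SameCycle x y)
    (h' : Noncrossing (swap x y * π)) (h : Noncrossing π) {b₁ b₂ : Fin n}
    (hb : π.SameCycle b₁ b₂) : ¬(sbtw x b₁ y ∧ sbtw y b₂ x) := by
  rintro ⟨h₁, h₂⟩
  obtain ⟨u, hu⟩ : ∃ u, π u = x := ⟨_, π.apply_symm_apply x⟩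
  obtain ⟨t, ht⟩ : ∃ t, π t = y := ⟨_, π.apply_symm_apply y⟩
  have hπ'u : (swap x y * π) u = y := by simp [hu]
  have hπ't : (swap x y * π) t = x := by simp [ht]
  have hb' := sameCycle_swap_mul_of_sameCycle hxy hb
  have hu_arc : u = x ∨ sbtw u y x :=
    or_iff_not_imp_left.mpr (sbtw_of_noncrossing_swap_mul hxy h' hu)
  have ht_arc : t = y ∨ sbtw t x y := or_iff_not_imp_left.mpr
    (sbtw_of_noncrossing_swap_mul (fun h => hxy h.symm) (swap_comm x y ▸ h') ht)
  by_cases hA : sbtw t b₂ x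
  · have := h'.sbtw_of_sameCycle (hπ't ▸ hA) hb'.symm
    rw [hπ't, Fin.sbtw_iff] at this
    rw [Fin.sbtw_iff] at h₁ h₂ ht_arc
    omega
  by_cases hB : sbtw u b₁ y
  · have := h'.sbtw_of_sameCycle (hπ'u ▸ hB) hb'
    rw [hπ'u, Fin.sbtw_iff] at this
    rw [Fin.sbtw_iff] at h₁ h₂ hu_arc
    omega
  have hb₂ : sbtw u b₂ (π u) := by
    rw [hu]
    rw [Fin.sbtw_iff] at h₁ h₂ hu_arc hB ⊢
    omega
  have := h.sbtw_of_sameCycle hb₂ hb.symm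
  rw [hu, Fin.sbtw_iff] at this
  rw [Fin.sbtw_iff] at h₁ hB hu_arc
  omega

end Noncrossing

end Equiv.Perm

open Equiv.Perm

section SwapProd

variable {α : Type*} [DecidableEq α]

def swapProd (l : List (α × α)) : Perm α := (l.map fun p => swap p.1 p.2).prod

@[simp]
theorem swapProd_nil : swapProd ([] : List (α × α)) = 1 := rfl

@[simp]
theorem swapProd_cons (p : α × α) (l : List (α × α)) :
    swapProd (p :: l) = swap p.1 p.2 * swapProd l := rfl

def IsMerging : List (α × α) → Prop
  | [] => True
  | p :: l => ¬(swapProd l).SameCycle p.1 p.2 ∧ IsMerging l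

theorem IsMerging.sameCycle_of_mem [Finite α] {l : List (α × α)} (hl : IsMerging l) {p : α × α}
    (hp : p ∈ l) : (swapProd l).SameCycle p.1 p.2 := by
  induction l with
  | nil => simp at hp
  | cons q l ih =>
    rw [swapProd_cons]
    rcases List.mem_cons.mp hp with rfl | hp
    · exact sameCycle_swap_mul_of_not_sameCycle hl.1
    · exact sameCycle_swap_mul_of_sameCycle hl.1 (ih hl.2 hp)

end SwapProd

section MinimalFactorization

variable {α : Type*} [Fintype α] [LinearOrder α]

theorem card_le_numCycles_swapProd_add_length (l : List (α × α)) :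
    Fintype.card α ≤ numCycles (swapProd l) + l.length := by
  induction l with
  | nil => simp [numCycles_one]
  | cons p l ih =>
    have := numCycles_le_numCycles_swap_mul_add_one (π := swapProd l) (x := p.1) (y := p.2)
    simp only [swapProd_cons, List.length_cons]
    omega

theorem isMerging_of_numCycles_swapProd_add_length_eq {l : List (α × α)}
    (h : numCycles (swapProd l) + l.length = Fintype.card α) : IsMerging l := by
  induction l with
  | nil => trivial
  | cons p l ih =>
    simp only [swapProd_cons, List.length_cons] at h
    have hl := card_le_numCycles_swapProd_add_length l
    have hp : ¬(swapProd l).SameCycle p.1 p.2 := fun hp => by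
      have := numCycles_le_numCycles_swap_mul hp
      omega
    have := numCycles_le_numCycles_swap_mul_add_one (π := swapProd l) (x := p.1) (y := p.2)
    exact ⟨hp, ih (by omega)⟩

end MinimalFactorization

theorem not_crossing_of_isMerging {n : ℕ} {l : List (Fin n × Fin n)} (hl : IsMerging l)
    (h : Noncrossing (swapProd l)) {x y b₁ b₂ : Fin n} (ha : (x, y) ∈ l ∨ (y, x) ∈ l)
    (hb : (b₁, b₂) ∈ l ∨ (b₂, b₁) ∈ l) : ¬(sbtw x b₁ y ∧ sbtw y b₂ x) := by
  induction l with
  | nil => simp at ha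
  | cons p l ih =>
    obtain ⟨hp, hl⟩ := hl
    rw [swapProd_cons] at h
    have hπ : Noncrossing (swapProd l) := h.of_swap_mul hp
    have sameCycle_of_mem : ∀ {c d}, (c, d) ∈ l ∨ (d, c) ∈ l → (swapProd l).SameCycle c d :=
      fun hcd => hcd.elim hl.sameCycle_of_mem fun h => (hl.sameCycle_of_mem h).symm
    have merge_of_eq : ∀ {c d}, (c, d) = p ∨ (d, c) = p →
        ¬(swapProd l).SameCycle c d ∧ Noncrossing (swap c d * swapProd l) := by
      rintro c d (rfl | rfl)
      · exact ⟨hp, h⟩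
      · exact ⟨fun hc => hp hc.symm, swap_comm c d ▸ h⟩
    simp only [List.mem_cons] at ha hb
    rcases or_or_or_comm.mp ha with ha | ha <;> rcases or_or_or_comm.mp hb with hb | hb
    · rcases ha with ha | ha <;> rcases hb with hb | hb <;>
        simp only [Prod.ext_iff] at ha hb <;> rw [Fin.sbtw_iff, Fin.sbtw_iff] <;> omega
    · obtain ⟨hxy, h'⟩ := merge_of_eq ha
      exact not_crossing_of_noncrossing_swap_mul hxy h' hπ (sameCycle_of_mem hb)
    · obtain ⟨hb₁₂, h'⟩ := merge_of_eq hb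
      have := not_crossing_of_noncrossing_swap_mul hb₁₂ h' hπ (sameCycle_of_mem ha).symm
      rw [Fin.sbtw_iff, Fin.sbtw_iff] at this ⊢
      omega
    · exact ih hl hπ ha hb

section LongCycle

variable {n k : ℕ} [NeZero n] {σ : Perm (Fin n)}

theorem noncrossing_of_cycle_range (hkn : k ≤ n)
    (hσ1 : ∀ i : Fin n, (i : ℕ) + 1 < k → σ i = (((i : ℕ) + 1 : ℕ) : Fin n))
    (hσ2 : σ ((k - 1 : ℕ) : Fin n) = ((0 : ℕ) : Fin n))
    (hσ3 : ∀ i : Fin n, k ≤ (i : ℕ) → σ i = i) : Noncrossing σ := by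
  intro u v huv
  rcases lt_or_ge ((u : ℕ) + 1) k with hu | hu
  · have hσu : (σ u : ℕ) = u + 1 := by rw [hσ1 u hu, Fin.val_cast_of_lt (by omega)]
    rw [Fin.sbtw_iff] at huv
    omega
  rcases lt_or_ge (u : ℕ) k with hu' | hu'
  · have hu : u = ((k - 1 : ℕ) : Fin n) := Fin.ext (by rw [Fin.val_cast_of_lt (by omega)]; omega)
    have hσu : (σ u : ℕ) = 0 := by rw [hu, hσ2, Nat.cast_zero, Fin.val_zero]
    have hv : k ≤ (v : ℕ) := by rw [Fin.sbtw_iff] at huv; omega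
    rwa [hσ3 v hv]
  · rw [hσ3 u hu'] at huv
    exact absurd huv sbtw_irrefl_left_right

theorem numCycles_add_le_of_cycle_range (hkn : k ≤ n)
    (hσ1 : ∀ i : Fin n, (i : ℕ) + 1 < k → σ i = (((i : ℕ) + 1 : ℕ) : Fin n)) :
    numCycles σ + k ≤ n + 1 := by
  have hpow : ∀ i < k, (σ ^ i) 0 = ((i : ℕ) : Fin n) := by
    intro i hi
    induction i with
    | zero => rfl
    | succ i ih =>
      rw [pow_succ', mul_apply, ih (by omega),
        hσ1 _ (by rw [Fin.val_cast_of_lt (by omega)]; omega), Fin.val_cast_of_lt (by omega)]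
  have h0 : ∀ v ∈ ({v | (v : ℕ) < k} : Finset (Fin n)), σ.SameCycle 0 v := fun v hv =>
    ⟨v, by rw [zpow_natCast, hpow v (by simpa using hv), Fin.cast_val_eq_self]⟩
  have := numCycles_add_card_le_of_sameCycle fun v hv w hw => (h0 v hv).symm.trans (h0 w hw)
  rwa [Fin.card_filter_val_lt, min_eq_right hkn, Fintype.card_fin] at this

end LongCycle

theorem stmt9_general {n k : ℕ} [NeZero n] (hk2 : 2 ≤ k) (hkn : k ≤ n)
    (σ : Equiv.Perm (Fin n))
    (hσ1 : ∀ i : Fin n, (i : ℕ) + 1 < k → σ i = (((i : ℕ) + 1 : ℕ) : Fin n))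
    (hσ2 : σ ((k - 1 : ℕ) : Fin n) = ((0 : ℕ) : Fin n))
    (hσ3 : ∀ i : Fin n, k ≤ (i : ℕ) → σ i = i)
    (l : List (Fin n × Fin n))
    (hlen : l.length = k - 1)
    (hprod : (l.map fun p => Equiv.swap p.1 p.2).prod = σ)
    (a₁ a₂ b₁ b₂ : Fin n)
    (ha : (a₁, a₂) ∈ l ∨ (a₂, a₁) ∈ l) (hb : (b₁, b₂) ∈ l ∨ (b₂, b₁) ∈ l)
    (h1 : a₁ < b₁) (h2 : b₁ < a₂) :
    b₂ ≤ a₂ := by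
  have hσl : swapProd l = σ := hprod
  have hmerge : IsMerging l := by
    refine isMerging_of_numCycles_swapProd_add_length_eq
      (le_antisymm ?_ (card_le_numCycles_swapProd_add_length l))
    have := numCycles_add_le_of_cycle_range hkn hσ1
    rw [hσl, hlen, Fintype.card_fin]
    omega
  have hnc : Noncrossing (swapProd l) := hσl ▸ noncrossing_of_cycle_range hkn hσ1 hσ2 hσ3
  by_contra hb₂
  refine not_crossing_of_isMerging hmerge hnc ha hb ⟨?_, ?_⟩ <;> rw [Fin.sbtw_iff] <;> omega

/-- (elements of `{1,…,n}` modeled as `Fin n`, `0`-indexed) let `σ` be the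
cycle `(0 1 ⋯ k−1)` and let `τ` (the list `l` of swapped pairs) be a transposition
decomposition of `σ` with exactly `k − 1` transpositions.  If `swap a₁ a₂` and
`swap b₁ b₂` both occur in `τ`, with `a₁ < a₂`, `b₁ < b₂`, and `a₁ < b₁ < a₂`,
then `b₂ ≤ a₂`: the chords do not cross. -/
theorem stmt9 {n k : ℕ} [NeZero n] (hk2 : 2 ≤ k) (hkn : k ≤ n)
    (σ : Equiv.Perm (Fin n))
    (hσ1 : ∀ i : Fin n, (i : ℕ) + 1 < k → σ i = (((i : ℕ) + 1 : ℕ) : Fin n))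
    (hσ2 : σ ((k - 1 : ℕ) : Fin n) = ((0 : ℕ) : Fin n))
    (hσ3 : ∀ i : Fin n, k ≤ (i : ℕ) → σ i = i)
    (l : List (Fin n × Fin n)) (hne : ∀ p ∈ l, p.1 ≠ p.2)
    (hlen : l.length = k - 1)
    (hprod : (l.map fun p => Equiv.swap p.1 p.2).prod = σ)
    (a₁ a₂ b₁ b₂ : Fin n)
    (ha : (a₁, a₂) ∈ l ∨ (a₂, a₁) ∈ l) (hb : (b₁, b₂) ∈ l ∨ (b₂, b₁) ∈ l)
    (ha12 : a₁ < a₂) (hb12 : b₁ < b₂) (h1 : a₁ < b₁) (h2 : b₁ < a₂) :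
    b₂ ≤ a₂ :=
  stmt9_general hk2 hkn σ hσ1 hσ2 hσ3 l hlen hprod a₁ a₂ b₁ b₂ ha hb h1 h2
end

section
/- For every permutation π ∈ S_n: M_φ(π) ≥ (1/2) Σ_{i=1}^{n} cost(p*(i, π(i))). -/
variable {n : ℕ}

/-- The minimum `φ`-cost over all transposition decompositions of `π`. -/
noncomputable def Mcost (φ : Fin n → Fin n → ℝ) (π : Equiv.Perm (Fin n)) : ℝ :=
  sInf {c : ℝ | ∃ l : List (Fin n × Fin n), (∀ p ∈ l, p.1 ≠ p.2) ∧
    (l.map fun p => Equiv.swap p.1 p.2).prod = π ∧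
    (l.map fun p => φ p.1 p.2).sum = c}

/-- `p` is a path from `a` to `b`: a list of pairwise distinct elements starting
at `a` and ending at `b`. -/
def IsPathList (p : List (Fin n)) (a b : Fin n) : Prop :=
  p.Nodup ∧ p.head? = some a ∧ p.getLast? = some b

/-- The cost of a path: the sum of `φ` over consecutive pairs. -/
noncomputable def pathCost (φ : Fin n → Fin n → ℝ) (p : List (Fin n)) : ℝ :=
  ((p.zip p.tail).map fun q => φ q.1 q.2).sum

/-- `cost(p*(a,b))`: the minimum cost over all paths from `a` to `b`,
with `cost(p*(a,a)) = 0`. -/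
noncomputable def minPathCost (φ : Fin n → Fin n → ℝ) (a b : Fin n) : ℝ :=
  if a = b then 0
  else sInf {c : ℝ | ∃ p : List (Fin n), IsPathList p a b ∧ pathCost φ p = c}

/-!
Each transposition `(a b)` in a decomposition of `π` can raise `∑ᵢ cost(p*(i, π i))` by at
most `φ(a, b) + φ(b, a) = 2 φ(a, b)`: only the two terms at `a` and `b` change, and each of them
obeys the triangle inequality `cost(p*(a, x)) ≤ φ(a, b) + cost(p*(b, x))`, obtained by putting
`a` in front of a path from `b` to `x` (or, if `a` already lies on it, cutting the path at `a`, which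
since `φ ≥ 0` costs no more).
Starting from the identity, where the sum is `0`, induction over the decomposition gives the bound.
-/

section Paths

variable {φ : Fin n → Fin n → ℝ}

@[simp]
lemma pathCost_singleton (a : Fin n) : pathCost φ [a] = 0 := by
  simp [pathCost]

@[simp]
lemma pathCost_cons_cons (a b : Fin n) (t : List (Fin n)) :
    pathCost φ (a :: b :: t) = φ a b + pathCost φ (b :: t) := by
  simp [pathCost]

lemma IsPathList.singleton (a : Fin n) : IsPathList [a] a a := by
  simp [IsPathList]

lemma IsPathList.pair {a b : Fin n} (hab : a ≠ b) : IsPathList [a, b] a b := by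
  simp [IsPathList, hab]

variable (hnn : ∀ a b : Fin n, a ≠ b → 0 ≤ φ a b)
include hnn

lemma pathCost_le_cons {a : Fin n} {t : List (Fin n)} (h : (a :: t).IsChain (· ≠ ·)) :
    pathCost φ t ≤ pathCost φ (a :: t) := by
  cases t with
  | nil => simp [pathCost]
  | cons b t =>
    rw [pathCost_cons_cons]
    linarith [hnn a b (List.isChain_cons_cons.mp h).1]

lemma pathCost_le_of_suffix {p q : List (Fin n)} (hp : p.IsChain (· ≠ ·)) (hq : q <:+ p) :
    pathCost φ q ≤ pathCost φ p := by
  induction p with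
  | nil => rw [List.suffix_nil.mp hq]
  | cons a t ih =>
    rcases List.suffix_cons_iff.mp hq with rfl | hq
    · exact le_rfl
    · exact (ih hp.tail hq).trans (pathCost_le_cons hnn hp)

lemma pathCost_nonneg {p : List (Fin n)} (hp : p.IsChain (· ≠ ·)) : 0 ≤ pathCost φ p :=
  pathCost_le_of_suffix hnn hp (List.nil_suffix (l := p))

lemma minPathCost_le_pathCost {p : List (Fin n)} {a b : Fin n} (hp : IsPathList p a b) :
    minPathCost φ a b ≤ pathCost φ p := by
  unfold minPathCost
  split_ifs
  · exact pathCost_nonneg hnn hp.1.isChain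
  · refine csInf_le ⟨0, ?_⟩ ⟨p, hp, rfl⟩
    rintro _ ⟨q, hq, rfl⟩
    exact pathCost_nonneg hnn hq.1.isChain

lemma IsPathList.exists_cons_le {p : List (Fin n)} {a b x : Fin n} (hp : IsPathList p b x)
    (hab : a ≠ b) : ∃ q, IsPathList q a x ∧ pathCost φ q ≤ φ a b + pathCost φ p := by
  obtain ⟨hnodup, hhead, hlast⟩ := hp
  obtain ⟨t, rfl⟩ : ∃ t, p = b :: t := List.head?_eq_some_iff.mp hhead
  by_cases ha : a ∈ b :: t
  · obtain ⟨s, t', hst⟩ := List.append_of_mem ha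
    have hsuf : a :: t' <:+ b :: t := hst ▸ List.suffix_append s (a :: t')
    refine ⟨a :: t', ⟨hsuf.sublist.nodup hnodup, rfl, ?_⟩, ?_⟩
    · rwa [hst, List.getLast?_append_of_ne_nil _ (List.cons_ne_nil _ _)] at hlast
    · linarith [pathCost_le_of_suffix hnn hnodup.isChain hsuf, hnn a b hab]
  · refine ⟨a :: b :: t, ⟨List.nodup_cons.mpr ⟨ha, hnodup⟩, rfl, ?_⟩, by simp⟩
    rwa [List.getLast?_cons_cons]

lemma minPathCost_le_add (x : Fin n) {a b : Fin n} (hab : a ≠ b) :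
    minPathCost φ a x ≤ φ a b + minPathCost φ b x := by
  have hpath {p : List (Fin n)} (hp : IsPathList p b x) :
      minPathCost φ a x ≤ φ a b + pathCost φ p := by
    obtain ⟨q, hq, hle⟩ := hp.exists_cons_le hnn hab
    exact (minPathCost_le_pathCost hnn hq).trans hle
  by_cases hbx : b = x
  · subst hbx
    simpa [minPathCost] using hpath (IsPathList.singleton b)
  · rw [minPathCost.eq_def φ b x, if_neg hbx, ← sub_le_iff_le_add']
    refine le_csInf ⟨_, [b, x], IsPathList.pair hbx, rfl⟩ ?_
    rintro _ ⟨p, hp, rfl⟩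
    linarith [hpath hp]

end Paths

section Transpositions

variable {φ : Fin n → Fin n → ℝ} (hnn : ∀ a b : Fin n, a ≠ b → 0 ≤ φ a b)
include hnn

lemma sum_minPathCost_mul_swap_le (σ : Equiv.Perm (Fin n)) {a b : Fin n} (hab : a ≠ b) :
    ∑ i, minPathCost φ i ((σ * Equiv.swap a b) i) ≤
      ∑ i, minPathCost φ i (σ i) + (φ a b + φ b a) := by
  have hsplit : ∑ i, (minPathCost φ i ((σ * Equiv.swap a b) i) - minPathCost φ i (σ i)) =
      (minPathCost φ a (σ b) - minPathCost φ a (σ a)) +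
        (minPathCost φ b (σ a) - minPathCost φ b (σ b)) := by
    refine (Fintype.sum_eq_add a b hab fun i ⟨hia, hib⟩ => ?_).trans ?_
    · simp [Equiv.swap_apply_of_ne_of_ne hia hib]
    · simp
  have hfa := minPathCost_le_add hnn (σ b) hab
  have hfb := minPathCost_le_add hnn (σ a) hab.symm
  rw [Finset.sum_sub_distrib] at hsplit
  linarith

lemma sum_minPathCost_prod_swap_le (hsym : ∀ a b : Fin n, φ a b = φ b a)
    (l : List (Fin n × Fin n)) (hl : ∀ p ∈ l, p.1 ≠ p.2) :
    ∑ i, minPathCost φ i ((l.map fun p => Equiv.swap p.1 p.2).prod i) ≤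
      2 * (l.map fun p => φ p.1 p.2).sum := by
  induction l using List.reverseRecOn with
  | nil => simp [minPathCost]
  | append_singleton l x ih =>
    have hstep := sum_minPathCost_mul_swap_le hnn (l.map fun p => Equiv.swap p.1 p.2).prod
      (hl x (by simp))
    have hprev := ih fun p hp => hl p (by simp [hp])
    simp only [List.map_append, List.map_singleton, List.prod_append, List.prod_singleton,
      List.sum_append, List.sum_singleton] at hstep ⊢
    linarith [hsym x.1 x.2]

end Transpositions

lemma exists_swap_list_prod_eq (π : Equiv.Perm (Fin n)) :
    ∃ l : List (Fin n × Fin n), (∀ p ∈ l, p.1 ≠ p.2) ∧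
      (l.map fun p => Equiv.swap p.1 p.2).prod = π := by
  induction π using Equiv.Perm.swap_induction_on with
  | one => exact ⟨[], by simp, by simp⟩
  | swap_mul σ x y hxy ih =>
    obtain ⟨l, hl, hprod⟩ := ih
    refine ⟨(x, y) :: l, ?_, by simp [hprod]⟩
    simpa [hxy] using hl

/-- for every permutation `π`,
`M_φ(π) ≥ (1/2) Σ_{i} cost(p*(i, π i))`. -/
theorem stmt13 (φ : Fin n → Fin n → ℝ)
    (hnn : ∀ a b : Fin n, a ≠ b → 0 ≤ φ a b)
    (hsym : ∀ a b : Fin n, φ a b = φ b a)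
    (π : Equiv.Perm (Fin n)) :
    (1 / 2 : ℝ) * ∑ i : Fin n, minPathCost φ i (π i) ≤ Mcost φ π := by
  obtain ⟨l, hl, hprod⟩ := exists_swap_list_prod_eq π
  refine le_csInf ⟨_, l, hl, hprod, rfl⟩ ?_
  rintro _ ⟨l, hl, rfl, rfl⟩
  linarith [sum_minPathCost_prod_swap_le hnn hsym l hl]
end
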